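/- Let ξ¹, ξ² be two (not necessarily jointly Gaussian) space-time white noises on the same probability space such that the bilinear form I(φ,ψ) = E[(ξ¹,φ)(ξ²,ψ)] vanishes whenever φ, ψ ∈ L²(ℝ₊ × ℝ) have disjoint supports. Then there exists v ∈ L^∞(ℝ₊ × ℝ) with |v| ≤ 1 almost everywhere such that E[(ξ¹,φ)(ξ²,ψ)] = ∫ φ ψ v for all φ, ψ ∈ L². -/

import Mathlib

open MeasureTheory Filter
open scoped ENNReal NNReal

/-- The (restricted Lebesgue) measure on `ℝ₊ × ℝ`, viewed inside `ℝ × ℝ`. -/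
noncomputable def halfSpaceMeasure : Measure (ℝ × ℝ) :=
  volume.restrict (Set.Ici (0 : ℝ) ×ˢ Set.univ)

/-- A space-time white noise, modelled as a linear isometry from `L²(ℝ₊ × ℝ)` into
`L²(Ω, P)` (so that `E[(ξ,φ)²] = ‖φ‖₂²`). -/
abbrev WhiteNoise {Ω : Type*} [MeasurableSpace Ω] (P : Measure Ω) :=
  Lp ℝ 2 halfSpaceMeasure →ₗᵢ[ℝ] Lp ℝ 2 P

local notation "μ" => halfSpaceMeasure
local notation "L2h" => Lp ℝ 2 halfSpaceMeasure

noncomputable def mull (h : ℝ × ℝ → ℝ) (φ : L2h) : L2h := open scoped Classical in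
  if mem : MemLp (fun x => h x * (φ : ℝ × ℝ → ℝ) x) 2 halfSpaceMeasure then mem.toLp _ else 0

theorem memℒp_mul_bdd {h : ℝ × ℝ → ℝ} (hm : AEStronglyMeasurable h μ) {C : ℝ}
    (hC : ∀ᵐ x ∂μ, |h x| ≤ C) (φ : L2h) :
    MemLp (fun x => h x * (φ : ℝ × ℝ → ℝ) x) 2 μ := by
  refine MemLp.of_le ((Lp.memLp φ).const_mul C) (hm.mul (Lp.aestronglyMeasurable φ)) ?_
  filter_upwards [hC] with x hx
  simp only [norm_mul, Real.norm_eq_abs]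
  exact mul_le_mul_of_nonneg_right (hx.trans (le_abs_self C)) (abs_nonneg _)

theorem mull_coe {h : ℝ × ℝ → ℝ} {φ : L2h}
    (mem : MemLp (fun x => h x * (φ : ℝ × ℝ → ℝ) x) 2 μ) :
    (mull h φ : ℝ × ℝ → ℝ) =ᵐ[μ] fun x => h x * (φ : ℝ × ℝ → ℝ) x := by
  rw [mull, dif_pos mem]; exact mem.coeFn_toLp

theorem inner_mull_left {h : ℝ × ℝ → ℝ} {φ : L2h}
    (mem : MemLp (fun x => h x * (φ : ℝ × ℝ → ℝ) x) 2 μ) (ψ : L2h) :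
    (inner ℝ (mull h φ) ψ : ℝ)
      = ∫ x, h x * (φ : ℝ × ℝ → ℝ) x * (ψ : ℝ × ℝ → ℝ) x ∂μ := by
  rw [L2.inner_def]
  refine integral_congr_ae ?_
  filter_upwards [mull_coe mem] with x hx
  simp [hx, RCLike.inner_apply]; ring

theorem inner_mull_swap {h : ℝ × ℝ → ℝ} {φ ψ : L2h}
    (memφ : MemLp (fun x => h x * (φ : ℝ × ℝ → ℝ) x) 2 μ)
    (memψ : MemLp (fun x => h x * (ψ : ℝ × ℝ → ℝ) x) 2 μ) :
    (inner ℝ (mull h φ) ψ : ℝ) = inner ℝ φ (mull h ψ) := by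
  rw [inner_mull_left memφ, real_inner_comm, inner_mull_left memψ]
  refine integral_congr_ae (Filter.Eventually.of_forall fun x => ?_)
  ring

/-- the indicator function of a set -/
noncomputable def indf (A : Set (ℝ × ℝ)) : ℝ × ℝ → ℝ := A.indicator fun _ => (1:ℝ)

theorem indf_abs_le (A : Set (ℝ × ℝ)) (x : ℝ × ℝ) : |indf A x| ≤ 1 := by
  rw [indf]
  by_cases h : x ∈ A <;> simp [Set.indicator_apply, h]

theorem indf_measurable {A : Set (ℝ × ℝ)} (hA : MeasurableSet A) : Measurable (indf A) :=
  measurable_const.indicator hA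

theorem memℒp_indf_mul {A : Set (ℝ × ℝ)} (hA : MeasurableSet A) (φ : L2h) :
    MemLp (fun x => indf A x * (φ : ℝ × ℝ → ℝ) x) 2 μ :=
  memℒp_mul_bdd (indf_measurable hA).aestronglyMeasurable
    (Eventually.of_forall (indf_abs_le A)) φ

theorem mull_indf_add_compl {A : Set (ℝ × ℝ)} (hA : MeasurableSet A) (φ : L2h) :
    mull (indf A) φ + mull (indf Aᶜ) φ = φ := by
  refine Lp.ext ?_
  filter_upwards [Lp.coeFn_add (mull (indf A) φ) (mull (indf Aᶜ) φ),
    mull_coe (memℒp_indf_mul hA φ), mull_coe (memℒp_indf_mul hA.compl φ)] with x h1 h2 h3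
  rw [h1, Pi.add_apply, h2, h3]
  by_cases h : x ∈ A <;> simp [indf, Set.indicator_apply, h]

noncomputable def Tmap {Ω : Type*} [MeasurableSpace Ω] {P : Measure Ω}
    (ξ₁ ξ₂ : WhiteNoise P) (φ : L2h) : L2h :=
  (InnerProductSpace.toDual ℝ _).symm
    (((innerSL ℝ) (ξ₁ φ)).comp ξ₂.toContinuousLinearMap)

section TT
variable {Ω : Type*} [MeasurableSpace Ω] {P : Measure Ω} (ξ₁ ξ₂ : WhiteNoise P)

theorem Tmap_inner (φ ψ : L2h) :
    (inner ℝ (Tmap ξ₁ ξ₂ φ) ψ : ℝ) = inner ℝ (ξ₁ φ) (ξ₂ ψ) := by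
  rw [Tmap, InnerProductSpace.toDual_symm_apply]; rfl

theorem Tmap_integral (φ ψ : L2h) :
    (inner ℝ (Tmap ξ₁ ξ₂ φ) ψ : ℝ) = ∫ ω, (ξ₁ φ : Ω → ℝ) ω * (ξ₂ ψ : Ω → ℝ) ω ∂P := by
  rw [Tmap_inner, L2.inner_def]
  refine integral_congr_ae (Eventually.of_forall fun a => ?_)
  simp only [RCLike.inner_apply, conj_trivial]; ring

theorem Tmap_norm (φ : L2h) : ‖Tmap ξ₁ ξ₂ φ‖ ≤ ‖φ‖ := by
  rw [Tmap, LinearIsometryEquiv.norm_map]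
  calc ‖((innerSL ℝ) (ξ₁ φ)).comp ξ₂.toContinuousLinearMap‖
      ≤ ‖(innerSL ℝ) (ξ₁ φ)‖ * ‖ξ₂.toContinuousLinearMap‖ := ContinuousLinearMap.opNorm_comp_le _ _
    _ ≤ ‖φ‖ * 1 := by
        gcongr
        · rw [innerSL_apply_norm, ξ₁.norm_map]
        · exact ξ₂.norm_toContinuousLinearMap_le
    _ = ‖φ‖ := mul_one _

theorem Tmap_add (φ φ' : L2h) :
    Tmap ξ₁ ξ₂ (φ + φ') = Tmap ξ₁ ξ₂ φ + Tmap ξ₁ ξ₂ φ' := by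
  refine ext_inner_right ℝ fun ψ => ?_
  rw [inner_add_left, Tmap_inner, Tmap_inner, Tmap_inner, map_add, inner_add_left]

theorem Tmap_smul (c : ℝ) (φ : L2h) :
    Tmap ξ₁ ξ₂ (c • φ) = c • Tmap ξ₁ ξ₂ φ := by
  refine ext_inner_right ℝ fun ψ => ?_
  rw [real_inner_smul_left, Tmap_inner, Tmap_inner, ξ₁.map_smul, real_inner_smul_left]

theorem Tmap_sub (φ φ' : L2h) :
    Tmap ξ₁ ξ₂ (φ - φ') = Tmap ξ₁ ξ₂ φ - Tmap ξ₁ ξ₂ φ' := by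
  have h := Tmap_add ξ₁ ξ₂ (φ - φ') φ'
  rw [sub_add_cancel] at h
  rw [h]; abel

theorem Tmap_tendsto {f : ℕ → L2h} {g : L2h}
    (hf : Filter.Tendsto f Filter.atTop (nhds g)) :
    Filter.Tendsto (fun n => Tmap ξ₁ ξ₂ (f n)) Filter.atTop (nhds (Tmap ξ₁ ξ₂ g)) := by
  rw [tendsto_iff_dist_tendsto_zero] at hf ⊢
  refine squeeze_zero (fun n => dist_nonneg) (fun n => ?_) hf
  rw [dist_eq_norm, dist_eq_norm, ← Tmap_sub]
  exact Tmap_norm ξ₁ ξ₂ _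

variable (hdisj : ∀ φ ψ : L2h,
      (fun x => (φ : ℝ × ℝ → ℝ) x * (ψ : ℝ × ℝ → ℝ) x) =ᵐ[μ] 0 →
      ∫ ω, (ξ₁ φ : Ω → ℝ) ω * (ξ₂ ψ : Ω → ℝ) ω ∂P = 0)
include hdisj

theorem Tmap_local {φ ψ : L2h}
    (h : (fun x => (φ : ℝ × ℝ → ℝ) x * (ψ : ℝ × ℝ → ℝ) x) =ᵐ[μ] 0) :
    (inner ℝ (Tmap ξ₁ ξ₂ φ) ψ : ℝ) = 0 := by
  rw [Tmap_integral]; exact hdisj φ ψ h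

theorem Tmap_mull_indf {A : Set (ℝ × ℝ)} (hA : MeasurableSet A) (φ : L2h) :
    Tmap ξ₁ ξ₂ (mull (indf A) φ) = mull (indf A) (Tmap ξ₁ ξ₂ φ) := by
  refine ext_inner_right ℝ fun ψ => ?_
  have key : ∀ χ ψ' : L2h, (inner ℝ (Tmap ξ₁ ξ₂ (mull (indf A) χ)) (mull (indf Aᶜ) ψ') : ℝ) = 0 := by
    intro χ ψ'
    refine Tmap_local ξ₁ ξ₂ hdisj ?_
    filter_upwards [mull_coe (memℒp_indf_mul hA χ), mull_coe (memℒp_indf_mul hA.compl ψ')]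
      with x h1 h2
    rw [Pi.zero_apply, h1, h2]
    by_cases h : x ∈ A <;> simp [indf, Set.indicator_apply, h]
  have key2 : ∀ χ ψ' : L2h, (inner ℝ (Tmap ξ₁ ξ₂ (mull (indf Aᶜ) χ)) (mull (indf A) ψ') : ℝ) = 0 := by
    intro χ ψ'
    refine Tmap_local ξ₁ ξ₂ hdisj ?_
    filter_upwards [mull_coe (memℒp_indf_mul hA.compl χ), mull_coe (memℒp_indf_mul hA ψ')]
      with x h1 h2
    rw [Pi.zero_apply, h1, h2]
    by_cases h : x ∈ A <;> simp [indf, Set.indicator_apply, h]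
  have e1 : (inner ℝ (Tmap ξ₁ ξ₂ (mull (indf A) φ)) ψ : ℝ)
      = inner ℝ (Tmap ξ₁ ξ₂ (mull (indf A) φ)) (mull (indf A) ψ) := by
    conv_lhs => rw [← mull_indf_add_compl hA ψ]
    rw [inner_add_right, key, add_zero]
  have e2 : (inner ℝ (Tmap ξ₁ ξ₂ φ) (mull (indf A) ψ) : ℝ)
      = inner ℝ (Tmap ξ₁ ξ₂ (mull (indf A) φ)) (mull (indf A) ψ) := by
    conv_lhs => rw [← mull_indf_add_compl hA φ, Tmap_add, inner_add_left, key2, add_zero]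
  rw [e1, inner_mull_swap (memℒp_indf_mul hA (Tmap ξ₁ ξ₂ φ)) (memℒp_indf_mul hA ψ), e2]

end TT

theorem tendsto_eLpNorm_two_dominated {α : Type*} [MeasurableSpace α] {ν : Measure α}
    {f : ℕ → α → ℝ} {g bound : α → ℝ}
    (hf : ∀ n, AEStronglyMeasurable (f n) ν) (hb : MemLp bound 2 ν)
    (hbd : ∀ n, ∀ᵐ x ∂ν, |f n x| ≤ bound x)
    (hpt : ∀ᵐ x ∂ν, Tendsto (fun n => f n x) atTop (nhds (g x))) :
    Tendsto (fun n => eLpNorm (f n - g) 2 ν) atTop (nhds 0) := by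
  have hg : AEStronglyMeasurable g ν :=
    aestronglyMeasurable_of_tendsto_ae atTop hf hpt
  have hgb : ∀ᵐ x ∂ν, |g x| ≤ bound x := by
    have h := (ae_all_iff.2 hbd).and hpt
    filter_upwards [h] with x ⟨h1, h2⟩
    exact le_of_tendsto ((continuous_abs.tendsto _).comp h2) (Eventually.of_forall h1)
  -- lintegral of squares tends to zero
  have key : Tendsto (fun n => ∫⁻ x, (‖f n x - g x‖₊ : ℝ≥0∞) ^ (2:ℝ) ∂ν) atTop (nhds 0) := by
    have hbint : ∫⁻ x, ((2 * ‖bound x‖₊ : ℝ≥0∞)) ^ (2:ℝ) ∂ν ≠ ⊤ := by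
      have h2 : eLpNorm bound 2 ν < ⊤ := hb.2
      rw [eLpNorm_eq_lintegral_rpow_enorm_toReal (by norm_num) (by norm_num)] at h2
      simp only [ENNReal.toReal_ofNat] at h2
      have : ∫⁻ x, ((2 * ‖bound x‖₊ : ℝ≥0∞)) ^ (2:ℝ) ∂ν
          = 2 ^ (2:ℝ) * ∫⁻ x, (‖bound x‖₊ : ℝ≥0∞) ^ (2:ℝ) ∂ν := by
        rw [← lintegral_const_mul']
        · congr 1; ext x; rw [ENNReal.mul_rpow_of_nonneg _ _ (by norm_num)]
        · exact ENNReal.rpow_ne_top_of_nonneg (by norm_num) (by norm_num)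
      rw [this]
      refine ENNReal.mul_ne_top (by norm_num) ?_
      have := (ENNReal.rpow_lt_top_iff_of_pos (x := (∫⁻ x, (‖bound x‖₊ : ℝ≥0∞) ^ (2:ℝ) ∂ν)) (y := (1/2 : ℝ)) (by norm_num)).1 ?_
      · exact (lt_top_iff_ne_top.1 this)
      · exact lt_of_le_of_lt (le_of_eq rfl) h2
    have key' := tendsto_lintegral_of_dominated_convergence'
      (F := fun n x => (‖f n x - g x‖₊ : ℝ≥0∞) ^ (2:ℝ)) (f := fun _ => (0:ℝ≥0∞))
      (fun x => ((2 * ‖bound x‖₊ : ℝ≥0∞)) ^ (2:ℝ)) (fun n => ?_) ?_ hbint ?_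
    · simpa using key'
    · exact (((hf n).sub hg).aemeasurable.enorm.pow_const _)
    · intro n
      filter_upwards [hbd n, hgb] with x h1 h2
      refine ENNReal.rpow_le_rpow ?_ (by norm_num)
      rw [two_mul]
      calc (‖f n x - g x‖₊ : ℝ≥0∞) ≤ (‖f n x‖₊ : ℝ≥0∞) + ‖g x‖₊ := by
            exact_mod_cast nnnorm_sub_le _ _
        _ ≤ (‖bound x‖₊ : ℝ≥0∞) + ‖bound x‖₊ := by
            have e1 : ‖f n x‖ ≤ ‖bound x‖ := by
              rw [Real.norm_eq_abs, Real.norm_eq_abs]; exact h1.trans (le_abs_self _)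
            have e2 : ‖g x‖ ≤ ‖bound x‖ := by
              rw [Real.norm_eq_abs, Real.norm_eq_abs]; exact h2.trans (le_abs_self _)
            gcongr <;> exact_mod_cast ‹_›
    · filter_upwards [hpt] with x hx
      have h0 : Tendsto (fun n => f n x - g x) atTop (nhds 0) := by
        simpa using hx.sub (tendsto_const_nhds (x := g x))
      have h1 : Tendsto (fun n => (‖f n x - g x‖₊ : ℝ≥0∞)) atTop (nhds 0) := by
        rw [show ((0:ℝ≥0∞)) = ((‖(0:ℝ)‖₊ : ℝ≥0∞)) by simp]
        exact (ENNReal.continuous_coe.tendsto _).comp ((continuous_nnnorm.tendsto _).comp h0)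
      have := (ENNReal.continuous_rpow_const (y := (2:ℝ))).tendsto 0 |>.comp h1
      simpa [ENNReal.zero_rpow_of_pos, Function.comp_def] using this
  -- conclude
  have heq : ∀ n, eLpNorm (f n - g) 2 ν
      = (∫⁻ x, (‖f n x - g x‖₊ : ℝ≥0∞) ^ (2:ℝ) ∂ν) ^ (1/2 : ℝ) := by
    intro n
    rw [eLpNorm_eq_lintegral_rpow_enorm_toReal (by norm_num) (by norm_num)]
    simp [Pi.sub_apply, enorm_eq_nnnorm]
  simp_rw [heq]
  have := (ENNReal.continuous_rpow_const (y := (1/2:ℝ))).tendsto 0 |>.comp key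
  simpa [ENNReal.zero_rpow_of_pos, Function.comp_def] using this

theorem mull_hadd {h₁ h₂ : ℝ × ℝ → ℝ} {φ : L2h}
    (m1 : MemLp (fun x => h₁ x * (φ : ℝ × ℝ → ℝ) x) 2 μ)
    (m2 : MemLp (fun x => h₂ x * (φ : ℝ × ℝ → ℝ) x) 2 μ) :
    mull (fun x => h₁ x + h₂ x) φ = mull h₁ φ + mull h₂ φ := by
  have mem : MemLp (fun x => (h₁ x + h₂ x) * (φ : ℝ × ℝ → ℝ) x) 2 μ := by
    have := m1.add m2
    refine this.ae_eq (Eventually.of_forall fun x => ?_)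
    simp [add_mul]
  refine Lp.ext ?_
  filter_upwards [mull_coe mem, Lp.coeFn_add (mull h₁ φ) (mull h₂ φ), mull_coe m1, mull_coe m2]
    with x e0 e1 e2 e3
  rw [e0, e1, Pi.add_apply, e2, e3]; ring

theorem mull_cmul {h : ℝ × ℝ → ℝ} {φ : L2h} (c : ℝ)
    (m : MemLp (fun x => h x * (φ : ℝ × ℝ → ℝ) x) 2 μ) :
    mull (fun x => c * h x) φ = c • mull h φ := by
  have mem : MemLp (fun x => (c * h x) * (φ : ℝ × ℝ → ℝ) x) 2 μ := by
    refine (m.const_mul c).ae_eq (Eventually.of_forall fun x => ?_)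
    simp [mul_assoc]
  refine Lp.ext ?_
  filter_upwards [mull_coe mem, Lp.coeFn_smul c (mull h φ), mull_coe m] with x e0 e1 e2
  rw [e0, e1, Pi.smul_apply, e2, smul_eq_mul]; ring

theorem memℒp_simple_mul (s : SimpleFunc (ℝ × ℝ) ℝ) (φ : L2h) :
    MemLp (fun x => s x * (φ : ℝ × ℝ → ℝ) x) 2 μ := by
  obtain ⟨C, hC⟩ := s.exists_forall_norm_le
  exact memℒp_mul_bdd s.measurable.aestronglyMeasurable
    (Eventually.of_forall fun x => by simpa using hC x) φ

section TT2
variable {Ω : Type*} [MeasurableSpace Ω] {P : Measure Ω} (ξ₁ ξ₂ : WhiteNoise P)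
variable (hdisj : ∀ φ ψ : L2h,
      (fun x => (φ : ℝ × ℝ → ℝ) x * (ψ : ℝ × ℝ → ℝ) x) =ᵐ[μ] 0 →
      ∫ ω, (ξ₁ φ : Ω → ℝ) ω * (ξ₂ ψ : Ω → ℝ) ω ∂P = 0)
include hdisj

theorem Tmap_mull_simple (s : SimpleFunc (ℝ × ℝ) ℝ) (φ : L2h) :
    Tmap ξ₁ ξ₂ (mull ⇑s φ) = mull ⇑s (Tmap ξ₁ ξ₂ φ) := by
  induction s using SimpleFunc.induction generalizing φ with
  | const c hA =>
    rename_i A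
    have hcoe : ∀ ψ : L2h, mull ⇑(SimpleFunc.piecewise A hA (SimpleFunc.const _ c)
        (SimpleFunc.const _ 0)) ψ = mull (fun x => c * indf A x) ψ := by
      intro ψ
      congr 1
      funext x
      by_cases h : x ∈ A <;>
        simp [SimpleFunc.coe_piecewise, Set.piecewise, indf, Set.indicator_apply, h]
    rw [hcoe, hcoe, mull_cmul c (memℒp_indf_mul hA φ), mull_cmul c (memℒp_indf_mul hA _),
      Tmap_smul, Tmap_mull_indf ξ₁ ξ₂ hdisj hA]
  | add hsupp hf hg =>
    rename_i f g
    have hcoe : ∀ ψ : L2h, mull ⇑(f + g) ψ = mull f ψ + mull g ψ := by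
      intro ψ
      have : mull ⇑(f + g) ψ = mull (fun x => f x + g x) ψ := by congr 1
      rw [this, mull_hadd (memℒp_simple_mul f ψ) (memℒp_simple_mul g ψ)]
    rw [hcoe, hcoe, Tmap_add, hf, hg]

theorem Tmap_mull_bdd {h : ℝ × ℝ → ℝ} (hm : Measurable h) {C : ℝ}
    (hC : ∀ x, |h x| ≤ C) (φ : L2h) :
    Tmap ξ₁ ξ₂ (mull h φ) = mull h (Tmap ξ₁ ξ₂ φ) := by
  set s : ℕ → SimpleFunc (ℝ × ℝ) ℝ :=
    fun n => SimpleFunc.approxOn h hm Set.univ 0 (Set.mem_univ 0) n with hs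
  have hCnn : 0 ≤ C := le_trans (abs_nonneg _) (hC (0, 0))
  have hsb : ∀ n x, |s n x| ≤ 2 * C := by
    intro n x
    have h1 : dist (s n x) (h x) ≤ dist (0 : ℝ) (h x) := by
      have := SimpleFunc.edist_approxOn_le hm (Set.mem_univ (0:ℝ)) x n
      rw [edist_dist, edist_dist] at this
      exact (ENNReal.ofReal_le_ofReal_iff dist_nonneg).1 this
    have : |s n x| ≤ |s n x - h x| + |h x| := by
      calc |s n x| = |(s n x - h x) + h x| := by ring_nf
        _ ≤ |s n x - h x| + |h x| := abs_add_le _ _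
    rw [Real.dist_eq, Real.dist_eq, zero_sub, abs_neg] at h1
    calc |s n x| ≤ |s n x - h x| + |h x| := this
      _ ≤ |h x| + |h x| := by gcongr
      _ ≤ C + C := by have := hC x; gcongr
      _ = 2 * C := by ring
  have hspt : ∀ x, Tendsto (fun n => s n x) atTop (nhds (h x)) := fun x =>
    SimpleFunc.tendsto_approxOn hm (Set.mem_univ 0) (by simp)
  -- convergence `mull (s n) ψ → mull h ψ` for any ψ
  have conv : ∀ ψ : L2h, Tendsto (fun n => mull (⇑(s n)) ψ) atTop (nhds (mull h ψ)) := by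
    intro ψ
    have memh : MemLp (fun x => h x * (ψ : ℝ × ℝ → ℝ) x) 2 μ :=
      memℒp_mul_bdd hm.aestronglyMeasurable (Eventually.of_forall hC) ψ
    rw [Lp.tendsto_Lp_iff_tendsto_eLpNorm']
    have key : Tendsto (fun n =>
        eLpNorm ((fun x => s n x * (ψ : ℝ × ℝ → ℝ) x) - fun x => h x * (ψ : ℝ × ℝ → ℝ) x) 2 μ)
        atTop (nhds 0) := by
      refine tendsto_eLpNorm_two_dominated (bound := fun x => 2 * C * ‖(ψ : ℝ × ℝ → ℝ) x‖)
        (fun n => (memℒp_simple_mul (s n) ψ).1) (((Lp.memLp ψ).norm).const_mul (2*C)) ?_ ?_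
      · intro n
        refine Eventually.of_forall fun x => ?_
        show |s n x * (ψ : ℝ × ℝ → ℝ) x| ≤ 2 * C * ‖(ψ : ℝ × ℝ → ℝ) x‖
        rw [abs_mul, Real.norm_eq_abs]
        exact mul_le_mul_of_nonneg_right (hsb n x) (abs_nonneg _)
      · refine Eventually.of_forall fun x => ?_
        exact (hspt x).mul tendsto_const_nhds
    refine key.congr fun n => ?_
    refine (eLpNorm_congr_ae ?_).symm
    filter_upwards [mull_coe (memℒp_simple_mul (s n) ψ), mull_coe memh] with x e1 e2
    simp [e1, e2]
  have lhs := Tmap_tendsto ξ₁ ξ₂ (conv φ)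
  have rhs := conv (Tmap ξ₁ ξ₂ φ)
  have heq : ∀ n, Tmap ξ₁ ξ₂ (mull (⇑(s n)) φ) = mull (⇑(s n)) (Tmap ξ₁ ξ₂ φ) :=
    fun n => Tmap_mull_simple ξ₁ ξ₂ hdisj (s n) φ
  refine tendsto_nhds_unique ?_ rhs
  exact lhs.congr fun n => heq n

end TT2

noncomputable def gfun : ℝ × ℝ → ℝ := fun x => (1 + ‖x‖) ^ (-(2:ℝ))

theorem gfun_pos (x : ℝ × ℝ) : 0 < gfun x :=
  Real.rpow_pos_of_pos (by positivity) _

theorem gfun_measurable : Measurable gfun := by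
  unfold gfun; fun_prop

theorem gfun_memℒp : MemLp gfun 2 μ := by
  rw [memLp_two_iff_integrable_sq gfun_measurable.aestronglyMeasurable]
  have h4 : Integrable (fun x : ℝ × ℝ => (1 + ‖x‖) ^ (-(4:ℝ))) volume := by
    refine integrable_one_add_norm ?_
    simp [Module.finrank_prod]
    norm_num
  have h4' : Integrable (fun x : ℝ × ℝ => (1 + ‖x‖) ^ (-(4:ℝ))) μ := h4.restrict
  refine h4'.congr (Eventually.of_forall fun x => ?_)
  show (1 + ‖x‖) ^ (-(4:ℝ)) = ((1 + ‖x‖) ^ (-(2:ℝ))) ^ (2:ℕ)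
  rw [← Real.rpow_natCast ((1 + ‖x‖) ^ (-(2:ℝ))) 2, ← Real.rpow_mul (by positivity)]
  norm_num

theorem clamp_le {q n : ℝ} (hn : 0 ≤ n) : |max (-n) (min n q)| ≤ |q| ∧ |max (-n) (min n q)| ≤ n := by
  constructor
  · rcases le_total 0 q with hq | hq
    · rw [abs_of_nonneg hq] at *
      refine abs_le.2 ⟨?_, ?_⟩
      · exact le_trans (by linarith [le_min hn hq] : -q ≤ min n q) (le_max_right _ _)
      · exact max_le (by linarith) (min_le_right _ _)
    · rw [abs_of_nonpos hq]
      refine abs_le.2 ⟨?_, ?_⟩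
      · simp only [neg_neg]
        exact le_trans (le_min (hq.trans hn) le_rfl) (le_max_right _ _)
      · exact max_le (by linarith) ((min_le_right _ _).trans (by linarith))
  · refine abs_le.2 ⟨le_max_left _ _, max_le (by linarith) (min_le_left _ _)⟩

section TT3
variable {Ω : Type*} [MeasurableSpace Ω] {P : Measure Ω} (ξ₁ ξ₂ : WhiteNoise P)
variable (hdisj : ∀ φ ψ : L2h,
      (fun x => (φ : ℝ × ℝ → ℝ) x * (ψ : ℝ × ℝ → ℝ) x) =ᵐ[μ] 0 →
      ∫ ω, (ξ₁ φ : Ω → ℝ) ω * (ξ₂ ψ : Ω → ℝ) ω ∂P = 0)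
include hdisj

theorem Tmap_eq_mul : ∃ v : ℝ × ℝ → ℝ, Measurable v ∧
    ∀ φ : L2h, (Tmap ξ₁ ξ₂ φ : ℝ × ℝ → ℝ) =ᵐ[μ] fun x => (φ : ℝ × ℝ → ℝ) x * v x := by
  set G : L2h := gfun_memℒp.toLp gfun with hG
  have coeG : (G : ℝ × ℝ → ℝ) =ᵐ[μ] gfun := gfun_memℒp.coeFn_toLp
  obtain ⟨w, hwsm, hwe⟩ : ∃ w : ℝ × ℝ → ℝ, StronglyMeasurable w ∧
      (Tmap ξ₁ ξ₂ G : ℝ × ℝ → ℝ) =ᵐ[μ] w :=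
    ⟨(Lp.aestronglyMeasurable (Tmap ξ₁ ξ₂ G)).mk _,
      (Lp.aestronglyMeasurable (Tmap ξ₁ ξ₂ G)).stronglyMeasurable_mk,
      (Lp.aestronglyMeasurable (Tmap ξ₁ ξ₂ G)).ae_eq_mk⟩
  set v : ℝ × ℝ → ℝ := fun x => w x / gfun x with hv
  refine ⟨v, hwsm.measurable.div gfun_measurable, fun φ => ?_⟩
  -- measurable representative of φ
  set φM : ℝ × ℝ → ℝ := (Lp.aestronglyMeasurable φ).mk _ with hφM
  have hφMsm : StronglyMeasurable φM := (Lp.aestronglyMeasurable φ).stronglyMeasurable_mk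
  have hφe : (φ : ℝ × ℝ → ℝ) =ᵐ[μ] φM := (Lp.aestronglyMeasurable φ).ae_eq_mk
  set q : ℝ × ℝ → ℝ := fun x => φM x / gfun x with hq
  have hqm : Measurable q := hφMsm.measurable.div gfun_measurable
  set h : ℕ → ℝ × ℝ → ℝ := fun n x => max (-(n:ℝ)) (min (n:ℝ) (q x)) with hh
  have hm : ∀ n, Measurable (h n) := fun n =>
    measurable_const.max (measurable_const.min hqm)
  have habs : ∀ n x, |h n x| ≤ |q x| ∧ |h n x| ≤ (n:ℝ) := fun n x => clamp_le n.cast_nonneg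
  have hgabs : ∀ n x, |h n x * gfun x| ≤ |φM x| := by
    intro n x
    rw [abs_mul, abs_of_nonneg (gfun_pos x).le]
    calc |h n x| * gfun x ≤ |q x| * gfun x :=
          mul_le_mul_of_nonneg_right (habs n x).1 (gfun_pos x).le
      _ = |φM x| := by
          rw [hq, abs_div, abs_of_nonneg (gfun_pos x).le,
            div_mul_cancel₀ _ (gfun_pos x).ne']
  have hpt : ∀ x, Tendsto (fun n => h n x * gfun x) atTop (nhds (φM x)) := by
    intro x
    have : ∀ n ≥ ⌈|q x|⌉₊, h n x * gfun x = φM x := by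
      intro n hn
      have hqn : |q x| ≤ (n:ℝ) := (Nat.ceil_le.1 hn)
      have h1 : h n x = q x := by
        rw [hh]
        simp only []
        rw [min_eq_right (le_trans (le_abs_self _) hqn),
          max_eq_right (by have := neg_abs_le (q x); linarith)]
      rw [h1, hq, div_mul_cancel₀ _ (gfun_pos x).ne']
    exact tendsto_atTop_of_eventually_const this
  have memhnG : ∀ n, MemLp (fun x => h n x * (G : ℝ × ℝ → ℝ) x) 2 μ := fun n =>
    memℒp_mul_bdd (hm n).aestronglyMeasurable (Eventually.of_forall fun x => (habs n x).2) G
  have memhnTG : ∀ n, MemLp (fun x => h n x * (Tmap ξ₁ ξ₂ G : ℝ × ℝ → ℝ) x) 2 μ := fun n =>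
    memℒp_mul_bdd (hm n).aestronglyMeasurable (Eventually.of_forall fun x => (habs n x).2) _
  -- mull (h n) G → φ in L²
  have conv1 : Tendsto (fun n => mull (h n) G) atTop (nhds φ) := by
    rw [Lp.tendsto_Lp_iff_tendsto_eLpNorm']
    have key : Tendsto (fun n =>
        eLpNorm ((fun x => h n x * gfun x) - (φ : ℝ × ℝ → ℝ)) 2 μ) atTop (nhds 0) := by
      refine tendsto_eLpNorm_two_dominated (bound := fun x => |φM x|)
        (fun n => ((hm n).mul gfun_measurable).aestronglyMeasurable)
        ?_ (fun n => Eventually.of_forall (hgabs n)) ?_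
      · refine ((Lp.memLp φ).ae_eq hφe).norm.ae_eq (Eventually.of_forall fun x => ?_)
        simp [Real.norm_eq_abs]
      · filter_upwards [hφe] with x hx
        rw [hx]; exact hpt x
    refine key.congr fun n => ?_
    refine (eLpNorm_congr_ae ?_).symm
    filter_upwards [mull_coe (memhnG n), coeG] with x e1 e2
    simp [e1, e2]
  have conv2 : Tendsto (fun n => mull (h n) (Tmap ξ₁ ξ₂ G)) atTop (nhds (Tmap ξ₁ ξ₂ φ)) := by
    have := Tmap_tendsto ξ₁ ξ₂ conv1
    refine this.congr fun n => ?_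
    exact Tmap_mull_bdd ξ₁ ξ₂ hdisj (hm n) (fun x => (habs n x).2) G
  -- pass to a.e. convergent subsequence
  have tim : TendstoInMeasure μ (fun n x => (mull (h n) (Tmap ξ₁ ξ₂ G) : ℝ × ℝ → ℝ) x)
      atTop (Tmap ξ₁ ξ₂ φ : ℝ × ℝ → ℝ) := by
    refine tendstoInMeasure_of_tendsto_eLpNorm (p := 2) (by norm_num)
      (fun n => Lp.aestronglyMeasurable _) (Lp.aestronglyMeasurable _) ?_
    exact (Lp.tendsto_Lp_iff_tendsto_eLpNorm' _ _).1 conv2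
  obtain ⟨ns, hns, hae⟩ := tim.exists_seq_tendsto_ae
  have hcoe_all : ∀ᵐ x ∂μ, ∀ n, (mull (h n) (Tmap ξ₁ ξ₂ G) : ℝ × ℝ → ℝ) x
      = h n x * (Tmap ξ₁ ξ₂ G : ℝ × ℝ → ℝ) x :=
    ae_all_iff.2 fun n => mull_coe (memhnTG n)
  filter_upwards [hae, hcoe_all, hwe, hφe] with x hx1 hx2 hx3 hx4
  -- pointwise limit of h (ns i) x * w x
  have hqpt : Tendsto (fun i => h (ns i) x) atTop (nhds (q x)) := by
    have : ∀ i ≥ ⌈|q x|⌉₊, h (ns i) x = q x := by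
      intro i hi
      have hni : |q x| ≤ ((ns i : ℕ) : ℝ) := by
        refine le_trans (Nat.ceil_le.1 le_rfl) ?_
        exact_mod_cast le_trans hi (hns.le_apply)
      rw [hh]
      simp only []
      rw [min_eq_right (le_trans (le_abs_self _) hni),
        max_eq_right (by have := neg_abs_le (q x); linarith)]
    exact tendsto_atTop_of_eventually_const this
  have lim2 : Tendsto (fun i => (mull (h (ns i)) (Tmap ξ₁ ξ₂ G) : ℝ × ℝ → ℝ) x) atTop
      (nhds (q x * w x)) := by
    have : Tendsto (fun i => h (ns i) x * (Tmap ξ₁ ξ₂ G : ℝ × ℝ → ℝ) x) atTop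
        (nhds (q x * w x)) := by
      rw [hx3]
      exact hqpt.mul tendsto_const_nhds
    exact this.congr fun i => (hx2 (ns i)).symm
  have : (Tmap ξ₁ ξ₂ φ : ℝ × ℝ → ℝ) x = q x * w x := tendsto_nhds_unique hx1 lim2
  rw [this, hx4, hq, hv]
  field_simp
end TT3


/-- If two white noises `ξ¹, ξ²` on the same probability space satisfy
`E[(ξ¹,φ)(ξ²,ψ)] = 0` whenever `φ, ψ` have disjoint supports, then there is
`v ∈ L^∞(ℝ₊ × ℝ)` with `|v| ≤ 1` a.e. such that
`E[(ξ¹,φ)(ξ²,ψ)] = ∫ φ ψ v` for all `φ, ψ ∈ L²`. -/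
theorem stmt_1 {Ω : Type*} [MeasurableSpace Ω] (P : Measure Ω) [IsProbabilityMeasure P]
    (ξ₁ ξ₂ : WhiteNoise P)
    (hdisj : ∀ φ ψ : Lp ℝ 2 halfSpaceMeasure,
      (fun x => (φ : ℝ × ℝ → ℝ) x * (ψ : ℝ × ℝ → ℝ) x) =ᵐ[halfSpaceMeasure] 0 →
      ∫ ω, (ξ₁ φ : Ω → ℝ) ω * (ξ₂ ψ : Ω → ℝ) ω ∂P = 0) :
    ∃ v : ℝ × ℝ → ℝ, AEStronglyMeasurable v halfSpaceMeasure ∧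
      (∀ᵐ x ∂halfSpaceMeasure, |v x| ≤ 1) ∧
      ∀ φ ψ : Lp ℝ 2 halfSpaceMeasure,
        ∫ ω, (ξ₁ φ : Ω → ℝ) ω * (ξ₂ ψ : Ω → ℝ) ω ∂P
          = ∫ x, (φ : ℝ × ℝ → ℝ) x * (ψ : ℝ × ℝ → ℝ) x * v x ∂halfSpaceMeasure := by
  obtain ⟨v, hvm, hmul⟩ := Tmap_eq_mul ξ₁ ξ₂ hdisj
  have main : ∀ φ ψ : L2h,
      ∫ ω, (ξ₁ φ : Ω → ℝ) ω * (ξ₂ ψ : Ω → ℝ) ω ∂P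
        = ∫ x, (φ : ℝ × ℝ → ℝ) x * (ψ : ℝ × ℝ → ℝ) x * v x ∂μ := by
    intro φ ψ
    rw [← Tmap_integral ξ₁ ξ₂ φ ψ]
    have e1 : (inner ℝ (Tmap ξ₁ ξ₂ φ) ψ : ℝ)
        = ∫ x, (Tmap ξ₁ ξ₂ φ : ℝ × ℝ → ℝ) x * (ψ : ℝ × ℝ → ℝ) x ∂μ := by
      rw [L2.inner_def]
      refine integral_congr_ae (Eventually.of_forall fun a => ?_)
      simp only [RCLike.inner_apply, conj_trivial]; ring
    rw [e1]
    refine integral_congr_ae ?_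
    filter_upwards [hmul φ] with x hx
    rw [hx]; ring
  refine ⟨v, hvm.aestronglyMeasurable, ?_, main⟩
  -- the bound |v| ≤ 1 a.e.
  set S : Set (ℝ × ℝ) := {x | 1 < |v x|} with hSdef
  have hS : MeasurableSet S := measurableSet_lt measurable_const hvm.abs
  set G : L2h := gfun_memℒp.toLp gfun with hG
  have coeG : (G : ℝ × ℝ → ℝ) =ᵐ[μ] gfun := gfun_memℒp.coeFn_toLp
  set φS : L2h := mull (indf S) G with hφS
  set A : ℝ × ℝ → ℝ := fun x => indf S x * gfun x with hA
  set B : ℝ × ℝ → ℝ := fun x => indf S x * gfun x * v x with hB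
  have coeS : (φS : ℝ × ℝ → ℝ) =ᵐ[μ] A := by
    filter_upwards [mull_coe (memℒp_indf_mul hS G), coeG] with x e1 e2
    rw [e1, e2]
  have coeTS : (Tmap ξ₁ ξ₂ φS : ℝ × ℝ → ℝ) =ᵐ[μ] B := by
    filter_upwards [hmul φS, coeS] with x e1 e2
    rw [e1, e2]
  have hnorm : eLpNorm B 2 μ ≤ eLpNorm A 2 μ := by
    have e1 : eLpNorm B 2 μ = eLpNorm (Tmap ξ₁ ξ₂ φS : ℝ × ℝ → ℝ) 2 μ :=
      (eLpNorm_congr_ae coeTS).symm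
    have e2 : eLpNorm A 2 μ = eLpNorm (φS : ℝ × ℝ → ℝ) 2 μ :=
      (eLpNorm_congr_ae coeS).symm
    rw [e1, e2]
    have h3 := Tmap_norm ξ₁ ξ₂ φS
    rw [Lp.norm_def, Lp.norm_def] at h3
    exact (ENNReal.toReal_le_toReal (Lp.eLpNorm_ne_top _) (Lp.eLpNorm_ne_top _)).1 h3
  -- translate to lintegrals
  have heq2 : ∀ f : ℝ × ℝ → ℝ, eLpNorm f 2 μ
      = (∫⁻ x, (‖f x‖₊ : ℝ≥0∞) ^ (2:ℝ) ∂μ) ^ ((1:ℝ)/2) := by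
    intro f
    rw [eLpNorm_eq_lintegral_rpow_enorm_toReal (by norm_num) (by norm_num)]
    norm_num [enorm_eq_nnnorm]
  have hrpow : ∀ a : ℝ≥0∞, (a ^ (2:ℝ)) ^ ((1:ℝ)/2) = a := by
    intro a
    rw [← ENNReal.rpow_mul]; norm_num
  have hrpow' : ∀ a : ℝ≥0∞, (a ^ ((1:ℝ)/2)) ^ (2:ℝ) = a := by
    intro a
    rw [← ENNReal.rpow_mul]; norm_num
  have hIA_ne : ∫⁻ x, (‖A x‖₊ : ℝ≥0∞) ^ (2:ℝ) ∂μ ≠ ⊤ := by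
    intro hcon
    have := heq2 A
    rw [hcon] at this
    have h4 : eLpNorm A 2 μ = ⊤ := by
      rw [this, ENNReal.top_rpow_of_pos (by norm_num)]
    rw [← eLpNorm_congr_ae coeS] at h4
    exact Lp.eLpNorm_ne_top φS h4
  have hIle : ∫⁻ x, (‖B x‖₊ : ℝ≥0∞) ^ (2:ℝ) ∂μ ≤ ∫⁻ x, (‖A x‖₊ : ℝ≥0∞) ^ (2:ℝ) ∂μ := by
    have h0 : (∫⁻ x, (‖B x‖₊ : ℝ≥0∞) ^ (2:ℝ) ∂μ) ^ ((1:ℝ)/2)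
        ≤ (∫⁻ x, (‖A x‖₊ : ℝ≥0∞) ^ (2:ℝ) ∂μ) ^ ((1:ℝ)/2) := by
      rw [← heq2 B, ← heq2 A]; exact hnorm
    have := ENNReal.rpow_le_rpow (z := (2:ℝ)) h0 (by norm_num)
    rwa [hrpow', hrpow'] at this
  have hptle : (fun x => (‖A x‖₊ : ℝ≥0∞) ^ (2:ℝ)) ≤ᵐ[μ] fun x => (‖B x‖₊ : ℝ≥0∞) ^ (2:ℝ) := by
    refine Eventually.of_forall fun x => ?_
    by_cases hx : x ∈ S
    · have h1 : ‖A x‖ ≤ ‖B x‖ := by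
        rw [hA, hB, Real.norm_eq_abs, Real.norm_eq_abs]
        have hv1 : 1 ≤ |v x| := le_of_lt hx
        calc |indf S x * gfun x| = |indf S x * gfun x| * 1 := by ring
          _ ≤ |indf S x * gfun x| * |v x| := by gcongr
          _ = |indf S x * gfun x * v x| := (abs_mul _ _).symm
      refine ENNReal.rpow_le_rpow ?_ (by norm_num)
      exact_mod_cast h1
    · have : indf S x = 0 := by simp [indf, Set.indicator_apply, hx]
      simp [hA, hB, this]
  have hmeasB : AEMeasurable (fun x => (‖B x‖₊ : ℝ≥0∞) ^ (2:ℝ)) μ := by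
    have : Measurable B := ((indf_measurable hS).mul gfun_measurable).mul hvm
    exact (this.enorm.pow_const _).aemeasurable
  have haeeq := ae_eq_of_ae_le_of_lintegral_le hptle hIA_ne hmeasB hIle
  filter_upwards [haeeq] with x hx
  by_contra hlt
  push_neg at hlt
  have hxS : x ∈ S := hlt
  have hind : indf S x = 1 := by simp [indf, Set.indicator_apply, hxS]
  have e : (‖A x‖₊ : ℝ≥0∞) = ‖B x‖₊ := by
    have h2 : ((‖A x‖₊ : ℝ≥0∞) ^ (2:ℝ)) ^ ((1:ℝ)/2)
        = ((‖B x‖₊ : ℝ≥0∞) ^ (2:ℝ)) ^ ((1:ℝ)/2) := by rw [hx]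
    rwa [hrpow, hrpow] at h2
  have e' : |A x| = |B x| := by
    have := congrArg ENNReal.toReal e
    simpa [Real.norm_eq_abs] using this
  rw [hA, hB] at e'
  simp only [hind, one_mul] at e'
  rw [abs_mul, abs_of_nonneg (gfun_pos x).le] at e'
  have h5 : gfun x * 1 = gfun x * |v x| := by rw [mul_one]; exact e'
  have h6 := mul_left_cancel₀ (gfun_pos x).ne' h5
  linarith
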